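/- The map R descends to the circle ℝ/2ℤ: there is a continuous map R̄ : ℝ/2ℤ → ℝ/2ℤ satisfying R̄([y]) = [R(y)] for every y ∈ [0,2), and R̄ is a covering map each of whose fibers has exactly 3 elements (a threefold covering of the circle). -/

import Mathlib

/-!
Lift `R` to `[0, 2]` by the continuous map `L(y) = y + 2φ T(y)`, where the staircase `T` has
slope `1` on the three pieces where `R` has slope `φ³ = 1 + 2φ` and slope `0` elsewhere; then
`L ≡ R (mod 2)` on `[0, 2)`, `L(0) = 0` and `L(2) = 6`. Hence `G = L / 3` extends to an
increasing homeomorphism of `ℝ` commuting with `x ↦ x + 2`, which descends to a homeomorphism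
`g` of `ℝ/2ℤ`, and `R̄ = 3 • g`. Multiplication by `3` on the circle is a covering map whose
fibres are cosets of the `3`-torsion, a cyclic group of order `3`.
-/

open Set

noncomputable section

/-- The golden ratio `(1+√5)/2`. -/
def gold : ℝ := (1 + Real.sqrt 5) / 2

/-- The renormalization map `R` on `[0,2)`. -/
def Rmap (y : ℝ) : ℝ :=
  if y < 2 - gold then gold ^ 3 * y
  else if y < 4 - 2 * gold then y + 2 * gold - 2
  else if y < 2 * gold - 2 then gold ^ 3 * y - 2 * gold
  else if y < gold then y - 2 * gold + 2
  else gold ^ 3 * y - 4 * gold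

open Function AddConstMapClass

namespace AddCircle

section Torsion

variable {𝕜 : Type*} [Field 𝕜] [LinearOrder 𝕜] [IsStrictOrderedRing 𝕜] {p : 𝕜} [Fact (0 < p)]

theorem ker_nsmul_eq_zmultiples {n : ℕ} (hn : n ≠ 0) :
    (nsmulAddMonoidHom (α := AddCircle p) n).ker =
      AddSubgroup.zmultiples ((p / n : 𝕜) : AddCircle p) := by
  ext u
  rw [AddMonoidHom.mem_ker, nsmulAddMonoidHom_apply]
  constructor
  · intro hu
    obtain ⟨m, -, rfl⟩ := (AddCircle.nsmul_eq_zero_iff (Nat.pos_of_ne_zero hn)).mp hu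
    exact ⟨m, by simp [natCast_div_mul_eq_nsmul p]⟩
  · rintro ⟨k, rfl⟩
    rw [smul_comm, ← coe_nsmul, nsmul_eq_mul, mul_div_cancel₀ _ (Nat.cast_ne_zero.2 hn),
      coe_period, smul_zero]

theorem card_ker_nsmul {n : ℕ} (hn : n ≠ 0) :
    Nat.card (nsmulAddMonoidHom (α := AddCircle p) n).ker = n := by
  rw [ker_nsmul_eq_zmultiples hn, Nat.card_zmultiples,
    addOrderOf_period_div (Nat.pos_of_ne_zero hn)]

variable [TopologicalSpace 𝕜] [OrderTopology 𝕜] [Algebra ℚ 𝕜]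

theorem card_preimage_nsmul (n : ℕ) [NeZero n] (z : AddCircle p) :
    Nat.card ((n • ·) ⁻¹' {z} : Set (AddCircle p)) = n := by
  have hcov := isAddQuotientCoveringMap_nsmul_of_ne_zero p n
  obtain ⟨u, rfl⟩ := hcov.surjective z
  rw [Nat.card_congr (hcov.fiberEquivAddGroup ⟨u, rfl⟩), card_ker_nsmul (NeZero.ne n)]

end Torsion

section Descent

variable {𝕜 : Type*} [AddCommGroup 𝕜] {p : 𝕜}

theorem periodic_coe_comp_of_map_add {f : 𝕜 → 𝕜} (hf : ∀ x, f (x + p) = f x + p) :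
    Periodic (fun x ↦ (f x : AddCircle p)) p := fun x ↦ by
  simp only [hf, coe_add_period]

variable [TopologicalSpace 𝕜]

def homeomorphOfMapAdd (e : 𝕜 ≃ₜ 𝕜) (he : ∀ x, e (x + p) = e x + p) :
    AddCircle p ≃ₜ AddCircle p :=
  have he' : ∀ x, e.symm (x + p) = e.symm x + p := fun x ↦ by
    rw [e.symm_apply_eq, he, e.apply_symm_apply]
  { toFun := (periodic_coe_comp_of_map_add he).lift
    invFun := (periodic_coe_comp_of_map_add he').lift
    left_inv := fun u ↦ QuotientAddGroup.induction_on u fun x ↦ by simp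
    right_inv := fun u ↦ QuotientAddGroup.induction_on u fun x ↦ by simp
    continuous_toFun := (continuous_quotient_mk'.comp e.continuous).quotient_lift _
    continuous_invFun := (continuous_quotient_mk'.comp e.symm.continuous).quotient_lift _ }

end Descent

end AddCircle

namespace AddConstMap

theorem surjective_of_continuous {a b : ℝ} (hb : 0 < b) (f : ℝ →+c[a, b] ℝ)
    (hf : Continuous f) : Surjective f := by
  intro z
  obtain ⟨n, hn, -⟩ := existsUnique_sub_zsmul_mem_Ico hb z (f 0)
  have hfa : f a = f 0 + b := by rw [← map_add_const, zero_add]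
  obtain ⟨x, -, hx⟩ := intermediate_value_uIcc (a := 0) (b := a) hf.continuousOn
    (Icc_subset_uIcc (by rw [hfa]; exact Ico_subset_Icc_self hn))
  exact ⟨x + n • a, by rw [map_add_zsmul, hx, sub_add_cancel]⟩

variable (p : ℝ) [Fact (0 < p)]

def extendIco (f : ℝ → ℝ) : ℝ →+c[p, p] ℝ where
  toFun x := x + AddCircle.liftIco p 0 (fun y ↦ f y - y) x
  map_add_const' x := by simp only [AddCircle.coe_add_period, add_right_comm]

variable {p} {f : ℝ → ℝ}

theorem extendIco_apply_of_mem {x : ℝ} (hx : x ∈ Ico 0 p) : extendIco p f x = f x := by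
  change x + AddCircle.liftIco p 0 _ x = f x
  rw [AddCircle.liftIco_coe_apply (by simpa using hx), add_sub_cancel]

theorem eqOn_extendIco (hf : f p = f 0 + p) : EqOn (extendIco p f) f (Icc 0 p) := by
  intro x hx
  rcases hx.2.lt_or_eq with hxp | hxp
  · exact extendIco_apply_of_mem ⟨hx.1, hxp⟩
  · have := map_add_const (extendIco p f) 0
    rw [zero_add, extendIco_apply_of_mem ⟨le_rfl, Fact.out⟩] at this
    rw [hxp, this, hf]

theorem continuous_extendIco (hf : f p = f 0 + p) (hc : ContinuousOn f (Icc 0 p)) :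
    Continuous (extendIco p f) := by
  have hlift : Continuous (AddCircle.liftIco p 0 (fun y ↦ f y - y)) := by
    refine AddCircle.liftIco_continuous ?_ ?_ <;> rw [zero_add]
    · rw [hf]; ring
    · exact hc.sub continuousOn_id
  exact continuous_id.add (hlift.comp' (AddCircle.continuous_mk' p))

theorem strictMono_extendIco (hf : f p = f 0 + p) (hm : StrictMonoOn f (Icc 0 p)) :
    StrictMono (extendIco p f) := by
  rw [strictMono_iff_Icc (Fact.out : (0 : ℝ) < p) 0, zero_add]
  exact hm.congr (eqOn_extendIco hf).symm

end AddConstMap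

theorem gold_sq : gold ^ 2 = gold + 1 := Real.goldenRatio_sq

theorem gold_lt_two : gold < 2 := Real.goldenRatio_lt_two

theorem three_halves_lt_gold : 3 / 2 < gold := by
  have : (1 : ℝ) < gold := Real.one_lt_goldenRatio
  nlinarith [gold_sq]

def rmapStaircase (y : ℝ) : ℝ :=
  min y (2 - gold) + min (max (y - (4 - 2 * gold)) 0) (4 * gold - 6) + max (y - gold) 0

def rmapLift (y : ℝ) : ℝ := y + 2 * gold * rmapStaircase y

theorem continuous_rmapLift : Continuous rmapLift := by
  unfold rmapLift rmapStaircase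
  fun_prop

theorem strictMono_rmapLift : StrictMono rmapLift := by
  have hmono : Monotone rmapStaircase := fun x y hxy ↦ by
    unfold rmapStaircase
    gcongr
  exact strictMono_id.add_monotone (hmono.const_mul (by linarith [three_halves_lt_gold]))

theorem rmapLift_zero : rmapLift 0 = 0 := by
  have := three_halves_lt_gold
  have := gold_lt_two
  rw [rmapLift, rmapStaircase, min_eq_left (by linarith), max_eq_right (by linarith),
    min_eq_left (by linarith), max_eq_right (by linarith)]
  ring

theorem rmapLift_two : rmapLift 2 = 6 := by
  have := three_halves_lt_gold
  have := gold_lt_two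
  rw [rmapLift, rmapStaircase, min_eq_right (by linarith), max_eq_left (by linarith),
    min_eq_right (by linarith), max_eq_left (by linarith)]
  linear_combination 4 * gold_sq

theorem coe_rmapLift {y : ℝ} (hy : y ∈ Ico 0 2) :
    (rmapLift y : AddCircle (2 : ℝ)) = Rmap y := by
  obtain ⟨hy0, hy2⟩ := hy
  have := three_halves_lt_gold
  have := gold_lt_two
  have gold_cube : gold ^ 3 = 2 * gold + 1 := by linear_combination (gold + 1) * gold_sq
  obtain ⟨k, hk⟩ : ∃ k : ℕ, rmapLift y = Rmap y + k • 2 := by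
    unfold Rmap
    split_ifs with h1 h2 h3 h4 <;> rw [rmapLift, rmapStaircase]
    · rw [min_eq_left (by linarith), max_eq_right (by linarith), min_eq_left (by linarith),
        max_eq_right (by linarith)]
      exact ⟨0, by linear_combination (-y) * gold_cube⟩
    · rw [min_eq_right (by linarith), max_eq_right (by linarith), min_eq_left (by linarith),
        max_eq_right (by linarith)]
      exact ⟨0, by linear_combination (-2) * gold_sq⟩
    · rw [min_eq_right (by linarith), max_eq_left (by linarith), min_eq_left (by linarith),
        max_eq_right (by linarith)]
      exact ⟨1, by linear_combination (-y) * gold_cube + 2 * gold_sq⟩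
    · rw [min_eq_right (by linarith), max_eq_left (by linarith), min_eq_right (by linarith),
        max_eq_right (by linarith)]
      exact ⟨2, by linear_combination 6 * gold_sq⟩
    · rw [min_eq_right (by linarith), max_eq_left (by linarith), min_eq_right (by linarith),
        max_eq_left (by linarith)]
      exact ⟨2, by linear_combination (-y) * gold_cube + 4 * gold_sq⟩
  rw [hk, AddCircle.coe_add, AddCircle.coe_nsmul, AddCircle.coe_period, smul_zero, add_zero]

instance : Fact ((0 : ℝ) < 2) := ⟨two_pos⟩

def rmapLiftDivThree : AddConstMap ℝ ℝ 2 2 := AddConstMap.extendIco 2 (rmapLift · / 3)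

theorem rmapLift_two_div_three : rmapLift 2 / 3 = rmapLift 0 / 3 + 2 := by
  rw [rmapLift_zero, rmapLift_two]; norm_num

theorem strictMono_rmapLiftDivThree : StrictMono rmapLiftDivThree :=
  AddConstMap.strictMono_extendIco rmapLift_two_div_three
    ((strictMono_rmapLift.div_const three_pos).strictMonoOn _)

theorem surjective_rmapLiftDivThree : Surjective rmapLiftDivThree :=
  AddConstMap.surjective_of_continuous two_pos _ <|
    AddConstMap.continuous_extendIco rmapLift_two_div_three
      (continuous_rmapLift.div_const 3).continuousOn

def rmapCircleHomeomorph : AddCircle (2 : ℝ) ≃ₜ AddCircle (2 : ℝ) :=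
  AddCircle.homeomorphOfMapAdd
    (StrictMono.orderIsoOfSurjective _ strictMono_rmapLiftDivThree
      surjective_rmapLiftDivThree).toHomeomorph
    (map_add_const rmapLiftDivThree)

theorem three_nsmul_rmapCircleHomeomorph_coe {y : ℝ} (hy : y ∈ Ico 0 2) :
    3 • rmapCircleHomeomorph y = (Rmap y : AddCircle (2 : ℝ)) := by
  change 3 • ((rmapLiftDivThree y : ℝ) : AddCircle (2 : ℝ)) = _
  rw [← coe_rmapLift hy, rmapLiftDivThree, AddConstMap.extendIco_apply_of_mem hy,
    ← AddCircle.coe_nsmul, nsmul_eq_mul, Nat.cast_ofNat, mul_div_cancel₀ _ three_ne_zero]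

/-- The renormalization map descends to a continuous threefold covering of the circle
`ℝ/2ℤ`. -/
theorem Rmap_descends_to_threefold_covering :
    ∃ Rbar : AddCircle (2 : ℝ) → AddCircle (2 : ℝ),
      Continuous Rbar ∧
      (∀ y ∈ Set.Ico (0 : ℝ) 2, Rbar (y : AddCircle (2 : ℝ)) = (Rmap y : AddCircle (2 : ℝ))) ∧
      IsCoveringMap Rbar ∧
      ∀ z : AddCircle (2 : ℝ), Nat.card (Rbar ⁻¹' {z}) = 3 := by
  have hcov : IsCoveringMap ((3 • ·) ∘ rmapCircleHomeomorph) :=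
    (AddCircle.isAddQuotientCoveringMap_nsmul_of_ne_zero 2 3).isCoveringMap.comp_homeomorph _
  refine ⟨_, hcov.continuous, fun y hy ↦ three_nsmul_rmapCircleHomeomorph_coe hy, hcov,
    fun z ↦ ?_⟩
  rw [preimage_comp, Nat.card_preimage_of_injective rmapCircleHomeomorph.injective
    (by simp [rmapCircleHomeomorph.surjective.range_eq]), AddCircle.card_preimage_nsmul]
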